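/- arXiv:2511.16959 — 2 statements merged into one kernel-verified Lean document; each statement's English description precedes it below -/
import Mathlib

section
/- If n ≡ 0 (mod 3) and n ≥ 6, then the partition of {1,...,n} into the sets B_a = {3a+1, 3a+2, 3a+3} for 0 ≤ a ≤ n/3 - 1 is a block system for the action of ⟨r_n, r_{n-3}, r_2⟩; in particular each of r_n, r_{n-3}, r_2 permutes the blocks, and ⟨r_n, r_{n-3}, r_2⟩ is a proper subgroup of Sym_n. -/
/-- The prefix reversal `r i` on positions `1..n` (0-indexed as `Fin n`):
position `x+1 ↦ i+1-(x+1)` for `x+1 ≤ i`, i.e. `x ↦ i-1-x` for `x < i`, fixing the rest. -/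
def pr (n i : ℕ) : Equiv.Perm (Fin n) :=
  Function.Involutive.toPerm
    (fun x => if h : x.val < i ∧ i ≤ n then ⟨i - 1 - x.val, by omega⟩ else x)
    (by
      intro x
      apply Fin.ext
      dsimp only
      split_ifs with h1 h2 h3 <;> simp_all <;> omega)

/-!
The permutations mapping each fiber of `f` into a fiber form a submonoid of `Perm α`; when `α`
is finite this submonoid is closed under inverses, so it contains the subgroup generated by any of
its subsets. Blocks `{3a, 3a+1, 3a+2}` are the fibers of `x ↦ x / 3`, and a prefix reversal of
length divisible by `3` maps the block of `3a + j` to the block of `3(i/3 - 1 - a) + (2 - j)`.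
Since the swap of `0` and `3` breaks the first block, the generated group is not all of `Sym n`.
-/

section FiberPreserving

variable {α β : Type*} (f : α → β)

def fiberPreserving : Submonoid (Equiv.Perm α) where
  carrier := {g | ∀ x y, f x = f y → f (g x) = f (g y)}
  one_mem' _ _ h := h
  mul_mem' hg hh x y hxy := hg _ _ (hh x y hxy)

variable {f}

theorem mem_fiberPreserving {g : Equiv.Perm α} :
    g ∈ fiberPreserving f ↔ ∀ x y, f x = f y → f (g x) = f (g y) :=
  Iff.rfl

theorem swap_notMem_fiberPreserving [DecidableEq α] {x y z : α} (hxy : x ≠ y) (hfxy : f x = f y)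
    (hfxz : f x ≠ f z) : Equiv.swap x z ∉ fiberPreserving f := by
  have hyz : y ≠ z := by rintro rfl; exact hfxz hfxy
  intro h
  have := h x y hfxy
  rw [Equiv.swap_apply_left, Equiv.swap_apply_of_ne_of_ne hxy.symm hyz] at this
  exact hfxz (hfxy.trans this.symm)

theorem closure_le_fiberPreserving [Finite α] {s : Set (Equiv.Perm α)}
    (hs : s ⊆ fiberPreserving f) : (Subgroup.closure s).toSubmonoid ≤ fiberPreserving f := by
  rw [Subgroup.closure_toSubmonoid_of_finite]
  exact Submonoid.closure_le.mpr hs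

theorem closure_ne_top_of_subset_fiberPreserving [Finite α] {s : Set (Equiv.Perm α)}
    (hs : s ⊆ fiberPreserving f) {x y z : α} (hxy : x ≠ y) (hfxy : f x = f y)
    (hfxz : f x ≠ f z) : Subgroup.closure s ≠ ⊤ := by
  classical
  intro htop
  apply swap_notMem_fiberPreserving hxy hfxy hfxz
  apply closure_le_fiberPreserving hs
  simp [htop]

end FiberPreserving

theorem pr_val (n i : ℕ) (x : Fin n) :
    (pr n i x).val = if x.val < i ∧ i ≤ n then i - 1 - x.val else x.val := by
  change (dite _ _ _ : Fin n).val = _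
  split_ifs <;> rfl

theorem pr_mem_fiberPreserving_div_three {n i : ℕ} (hi : i ≤ 3 ∨ i % 3 = 0) :
    pr n i ∈ fiberPreserving (fun x : Fin n => x.val / 3) := by
  intro x y (hxy : x.val / 3 = y.val / 3)
  simp only [pr_val]
  split_ifs <;> omega

theorem stmt12 (n : ℕ) (hn : 6 ≤ n) (h3 : n % 3 = 0) :
    (∀ g ∈ ({pr n n, pr n (n - 3), pr n 2} : Set (Equiv.Perm (Fin n))),
      ∀ x y : Fin n, x.val / 3 = y.val / 3 → (g x).val / 3 = (g y).val / 3) ∧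
    Subgroup.closure ({pr n n, pr n (n - 3), pr n 2} : Set (Equiv.Perm (Fin n))) ≠ ⊤ := by
  have hgen : ({pr n n, pr n (n - 3), pr n 2} : Set (Equiv.Perm (Fin n))) ⊆
      fiberPreserving (fun x : Fin n => x.val / 3) := by
    rintro g (rfl | rfl | rfl) <;> exact pr_mem_fiberPreserving_div_three (by omega)
  refine ⟨fun g hg => mem_fiberPreserving.mp (hgen hg), ?_⟩
  exact closure_ne_top_of_subset_fiberPreserving hgen (x := ⟨0, by omega⟩) (y := ⟨1, by omega⟩)
    (z := ⟨3, by omega⟩) (by simp) (by simp) (by simp)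
end

section
/- If n ≡ 1 (mod 6), then the permutation σ = r_n ∘ r_{n-3} ∘ r_2 is an n-cycle, and writing s = ⌊n/6⌋, σ^{4s}(1) = 2 with gcd(4s, n) = 1; consequently ⟨r_n, r_{n-3}, r_2⟩ = Sym_n. -/
lemma pr_apply (n i : ℕ) (x : Fin n) :
    pr n i x = if h : x.val < i ∧ i ≤ n then ⟨i - 1 - x.val, by omega⟩ else x := rfl

lemma pr_apply_lt (n i : ℕ) (x : Fin n) (h1 : x.val < i) (h2 : i ≤ n) :
    (pr n i x).val = i - 1 - x.val := by
  rw [pr_apply, dif_pos ⟨h1, h2⟩]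

lemma pr_apply_ge (n i : ℕ) (x : Fin n) (h1 : i ≤ x.val) : pr n i x = x := by
  rw [pr_apply, dif_neg (by omega)]

lemma sigma_apply (n : ℕ) (hn : 7 ≤ n) (x : Fin n) :
    ((pr n n * pr n (n - 3) * pr n 2) x).val =
      if x.val = 0 then 4 else if x.val = 1 then 3
      else if x.val < n - 3 then x.val + 3
      else if x.val = n - 3 then 2 else if x.val = n - 2 then 1 else 0 := by
  have hx := x.isLt
  show ((pr n n) ((pr n (n - 3)) ((pr n 2) x))).val = _
  by_cases h1 : x.val < 2
  · have e1 : ((pr n 2) x).val = 1 - x.val := pr_apply_lt n 2 x h1 (by omega)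
    have e2 : ((pr n (n-3)) ((pr n 2) x)).val = (n-3) - 1 - ((pr n 2) x).val :=
      pr_apply_lt n (n-3) ((pr n 2) x) (by omega) (by omega)
    have e3 := pr_apply_lt n n ((pr n (n-3)) ((pr n 2) x)) (Fin.isLt _) le_rfl
    rw [e3, e2, e1]
    split_ifs <;> omega
  · rw [pr_apply_ge n 2 x (by omega)]
    by_cases h2 : x.val < n - 3
    · have e2 : ((pr n (n-3)) x).val = (n-3) - 1 - x.val :=
        pr_apply_lt n (n-3) x h2 (by omega)
      have e3 := pr_apply_lt n n ((pr n (n-3)) x) (Fin.isLt _) le_rfl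
      rw [e3, e2]
      split_ifs <;> omega
    · rw [pr_apply_ge n (n-3) x (by omega)]
      rw [pr_apply_lt n n x hx le_rfl]
      split_ifs <;> omega

/-- Orbit of 0 under σ when n = 6s+1. -/
def F (n s k : ℕ) : ℕ :=
  if k = 0 then 0
  else if k ≤ 2*s - 1 then 1 + 3*k
  else if k ≤ 4*s - 2 then 2 + 3*(k - 2*s)
  else if k = 4*s - 1 then n - 2
  else if k = 4*s then 1
  else if k ≤ 6*s - 1 then 3*(k - 4*s)
  else n - 1

lemma F_lt (n s k : ℕ) (hs : 1 ≤ s) (hn : n = 6*s+1) (hk : k ≤ 6*s) : F n s k < n := by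
  simp only [F]; split_ifs <;> omega

lemma F0 (n s : ℕ) : F n s 0 = 0 := by simp [F]

lemma F1 (n s k : ℕ) (h1 : 1 ≤ k) (h2 : k ≤ 2*s-1) : F n s k = 1 + 3*k := by
  simp only [F]; split_ifs <;> omega

lemma F2 (n s k : ℕ) (hs : 1 ≤ s) (h1 : 2*s ≤ k) (h2 : k ≤ 4*s-2) :
    F n s k = 2 + 3*(k - 2*s) := by
  simp only [F]; split_ifs <;> omega

lemma F3 (n s : ℕ) (hs : 1 ≤ s) : F n s (4*s-1) = n - 2 := by
  simp only [F]; split_ifs <;> omega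

lemma F4 (n s : ℕ) (hs : 1 ≤ s) : F n s (4*s) = 1 := by
  simp only [F]; split_ifs <;> omega

lemma F5 (n s k : ℕ) (h1 : 4*s+1 ≤ k) (h2 : k ≤ 6*s-1) : F n s k = 3*(k - 4*s) := by
  simp only [F]; split_ifs <;> omega

lemma F6 (n s : ℕ) (hs : 1 ≤ s) : F n s (6*s) = n - 1 := by
  simp only [F]; split_ifs <;> omega

lemma orbit (n s : ℕ) (hs : 1 ≤ s) (hn : n = 6*s+1) :
    ∀ k, k ≤ 6*s →
      (((pr n n * pr n (n - 3) * pr n 2) ^ k) (⟨0, by omega⟩ : Fin n)).val = F n s k := by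
  intro k hk
  induction k with
  | zero => simp [F]
  | succ k ih =>
    have ih' := ih (by omega)
    rw [pow_succ', Equiv.Perm.mul_apply]
    rw [sigma_apply n (by omega), ih']
    rcases (by omega : k = 0 ∨ (1 ≤ k ∧ k ≤ 2*s-2) ∨ k = 2*s-1 ∨ (2*s ≤ k ∧ k ≤ 4*s-3) ∨
        k = 4*s-2 ∨ k = 4*s-1 ∨ k = 4*s ∨ (4*s+1 ≤ k ∧ k ≤ 6*s-2) ∨ k = 6*s-1) with
      h|h|h|h|h|h|h|h|h
    · rw [h, F0, show (0:ℕ)+1 = 1 by rfl, F1 n s 1 (by omega) (by omega)]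
      split_ifs <;> omega
    · rw [F1 n s k (by omega) (by omega), F1 n s (k+1) (by omega) (by omega)]
      split_ifs <;> omega
    · rw [F1 n s k (by omega) (by omega), show k+1 = 2*s by omega,
        F2 n s (2*s) hs (by omega) (by omega)]
      split_ifs <;> omega
    · rw [F2 n s k hs (by omega) (by omega), F2 n s (k+1) hs (by omega) (by omega)]
      split_ifs <;> omega
    · rw [F2 n s k hs (by omega) (by omega), show k+1 = 4*s-1 by omega, F3 n s hs]
      split_ifs <;> omega
    · rw [h, F3 n s hs, show 4*s-1+1 = 4*s by omega, F4 n s hs]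
      split_ifs <;> omega
    · rw [h, F4 n s hs, F5 n s (4*s+1) (by omega) (by omega)]
      split_ifs <;> first | omega | (exfalso; assumption)
    · rw [F5 n s k (by omega) (by omega), F5 n s (k+1) (by omega) (by omega)]
      split_ifs <;> omega
    · rw [F5 n s k (by omega) (by omega), show k+1 = 6*s by omega, F6 n s hs]
      split_ifs <;> omega

lemma surj (n s v : ℕ) (hs : 1 ≤ s) (hn : n = 6*s+1) (hv : v < n) :
    ∃ k, k ≤ 6*s ∧ F n s k = v := by
  subst hn
  rcases (by omega : v = 0 ∨ v = 1 ∨ v = 6*s-1 ∨ v = 6*s ∨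
      (v % 3 = 1 ∧ 4 ≤ v ∧ v ≤ 6*s-2) ∨ (v % 3 = 2 ∧ 2 ≤ v ∧ v ≤ 6*s-4) ∨
      (v % 3 = 0 ∧ 3 ≤ v ∧ v ≤ 6*s-3)) with h|h|h|h|h|h|h
  · exact ⟨0, by omega, by rw [F0]; omega⟩
  · exact ⟨4*s, by omega, by rw [F4 _ _ hs]; omega⟩
  · exact ⟨4*s-1, by omega, by rw [F3 _ _ hs]; omega⟩
  · exact ⟨6*s, le_rfl, by rw [F6 _ _ hs]; omega⟩
  · exact ⟨(v-1)/3, by omega, by rw [F1 _ _ _ (by omega) (by omega)]; omega⟩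
  · exact ⟨2*s+(v-2)/3, by omega, by rw [F2 _ _ _ hs (by omega) (by omega)]; omega⟩
  · exact ⟨4*s+v/3, by omega, by rw [F5 _ _ _ (by omega) (by omega)]; omega⟩

lemma sigma_ne (n : ℕ) (hn : 7 ≤ n) (x : Fin n) : (pr n n * pr n (n-3) * pr n 2) x ≠ x := by
  intro h
  have h2 := sigma_apply n hn x
  rw [h] at h2
  have := x.isLt
  split_ifs at h2 <;> omega

lemma pr_two (n : ℕ) (hn : 2 ≤ n) :
    pr n 2 = Equiv.swap (⟨0, by omega⟩ : Fin n) (⟨1, by omega⟩ : Fin n) := by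
  apply Equiv.ext
  intro x
  rw [pr_apply, Equiv.swap_apply_def]
  split_ifs <;> first
    | rfl
    | (apply Fin.ext; simp_all [Fin.ext_iff]; omega)
    | (apply Fin.ext; simp_all [Fin.ext_iff])

theorem stmt13 (n : ℕ) (hn : 7 ≤ n) (h6 : n % 6 = 1) :
    (pr n n * pr n (n - 3) * pr n 2).IsCycle ∧
    (pr n n * pr n (n - 3) * pr n 2).support.card = n ∧
    ((pr n n * pr n (n - 3) * pr n 2) ^ (4 * (n / 6))) (⟨0, by omega⟩ : Fin n)
      = (⟨1, by omega⟩ : Fin n) ∧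
    Nat.gcd (4 * (n / 6)) n = 1 ∧
    Subgroup.closure ({pr n n, pr n (n - 3), pr n 2} : Set (Equiv.Perm (Fin n))) = ⊤ := by
  obtain ⟨s, hs, hns⟩ : ∃ s, 1 ≤ s ∧ n = 6*s+1 := ⟨n/6, by omega, by omega⟩
  set σ := pr n n * pr n (n - 3) * pr n 2 with hσ
  have horb := orbit n s hs hns
  have hsurj : ∀ y : Fin n, ∃ k : ℕ, ((σ ^ k) ⟨0, by omega⟩) = y := by
    intro y
    obtain ⟨k, hk, hFk⟩ := surj n s y.val hs hns y.isLt
    exact ⟨k, Fin.ext (by rw [horb k hk, hFk])⟩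
  have hne : ∀ x, σ x ≠ x := sigma_ne n hn
  have hcyc : σ.IsCycle := by
    refine ⟨⟨0, by omega⟩, hne _, fun y hy => ?_⟩
    obtain ⟨k, hk⟩ := hsurj y
    exact ⟨(k : ℤ), by simpa using hk⟩
  have hsupp : σ.support = Finset.univ :=
    Finset.eq_univ_iff_forall.mpr fun y => Equiv.Perm.mem_support.mpr (hne y)
  have hcard : σ.support.card = n := by
    rw [hsupp, Finset.card_univ, Fintype.card_fin]
  have hs6 : n / 6 = s := by omega
  have hpow : (σ ^ (4 * (n / 6))) (⟨0, by omega⟩ : Fin n) = (⟨1, by omega⟩ : Fin n) := by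
    rw [hs6]
    exact Fin.ext (by rw [horb (4*s) (by omega), F4 n s hs])
  have hcop : Nat.Coprime (4*s) n := by
    have h4 : Nat.Coprime 4 n := by
      have : Odd n := by rw [Nat.odd_iff]; omega
      have h2 : Nat.Coprime 2 n := this.coprime_two_left
      exact (show (4:ℕ) = 2^2 by norm_num) ▸ h2.pow_left 2
    have hsn : Nat.Coprime s n := by
      rw [hns, show 6*s+1 = 1 + s*6 by ring, Nat.coprime_add_mul_left_right]
      exact Nat.coprime_one_right s
    exact h4.mul hsn
  have hgcd : Nat.gcd (4 * (n / 6)) n = 1 := by rw [hs6]; exact hcop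
  refine ⟨hcyc, hcard, hpow, hgcd, ?_⟩
  have h0 : Nat.Coprime (4*s) (Fintype.card (Fin n)) := by
    rw [Fintype.card_fin]; exact hcop
  have key := Equiv.Perm.closure_cycle_coprime_swap (n := 4*s) h0 hcyc hsupp
    (⟨0, by omega⟩ : Fin n)
  have hswap : Equiv.swap (⟨0, by omega⟩ : Fin n) ((σ ^ (4*s)) ⟨0, by omega⟩) = pr n 2 := by
    rw [show ((σ ^ (4*s)) (⟨0, by omega⟩ : Fin n)) = (⟨1, by omega⟩ : Fin n) from
      Fin.ext (by rw [horb (4*s) (by omega), F4 n s hs])]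
    exact (pr_two n (by omega)).symm
  rw [eq_top_iff, ← key, Subgroup.closure_le]
  rintro τ hτ
  simp only [Set.mem_insert_iff, Set.mem_singleton_iff] at hτ
  rcases hτ with rfl | rfl
  · exact Subgroup.mul_mem _
      (Subgroup.mul_mem _
        (Subgroup.subset_closure (by simp))
        (Subgroup.subset_closure (by simp)))
      (Subgroup.subset_closure (by simp))
  · rw [hswap]
    exact Subgroup.subset_closure (by simp)
end
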